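/- arXiv:0704.1673 — 2 statements merged into one kernel-verified Lean document; each statement's English description precedes it below -/
import Mathlib

section
/- Let n be a positive even integer and let P be a symmetric n×n real matrix. Define the four-index array R : Fin n → Fin n → Fin n → Fin n → ℝ by R i j k l = P i k · δ j l − P i l · δ j k − P j k · δ i l + P j l · δ i k, where δ denotes the Kronecker delta. Then the double alternating sum over all pairs of permutations σ, τ of Fin n, Σ_{σ,τ} sign(σ)·sign(τ)·∏_{m=0}^{n/2−1} R (σ(2m)) (σ(2m+1)) (τ(2m)) (τ(2m+1)), equals 2^n · ((n/2)!)² · σ_{n/2}(P), where σ_{n/2}(P) denotes the sum over all subsets S of Fin n of cardinality n/2 of the determinants of the principal submatrices of P with rows and columns indexed by S. -/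
/-- The curvature-type four-index array built from a matrix `P` and the
Kronecker delta: `R i j k l = P i k δ_{jl} − P i l δ_{jk} − P j k δ_{il} + P j l δ_{ik}`. -/
def kroneckerCurvature {n : ℕ} (P : Matrix (Fin n) (Fin n) ℝ)
    (i j k l : Fin n) : ℝ :=
  P i k * (if j = l then (1:ℝ) else 0) - P i l * (if j = k then (1:ℝ) else 0)
    - P j k * (if i = l then (1:ℝ) else 0) + P j l * (if i = k then (1:ℝ) else 0)

/-- `σ_k(A)`: the sum of the principal `k × k` minors of the matrix `A`. -/
def principalMinorSum {n : ℕ} (k : ℕ) (A : Matrix (Fin n) (Fin n) ℝ) : ℝ :=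
  ∑ S ∈ Finset.powersetCard k (Finset.univ : Finset (Fin n)),
    Matrix.det (fun i j : S => A i.1 j.1)

/-!
Group the slots into the pairs `(a, b) = (2m, 2m + 1)`. The sum is alternating in `σ` and in `τ`,
so the transposition of `a` and `b` (applied to `σ`, to `τ`, or to both) shows that each of the four
terms of a curvature factor contributes the same amount: every factor may be replaced by
`4 · P (σ a) (τ a) · δ (σ b) (τ b)`. For fixed `σ`, only those `τ` that agree with `σ` on the odd
slots survive, and the alternating sum over them is the principal minor of `P` on the `σ`-image of
the even slots. Each `n/2`-subset is such an image for exactly `((n/2)!)²` permutations `σ`.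
-/

open Equiv Equiv.Perm Finset Function Matrix Sum
open scoped Nat Pointwise

theorem Fintype.sum_mul_comp_mul_right_of_neg {G R : Type*} [Group G] [Fintype G] [Ring R]
    (g h : G → R) (s : G) (hg : ∀ x, g (x * s) = -g x) :
    ∑ x, g x * h (x * s) = -∑ x, g x * h x :=
  calc ∑ x, g x * h (x * s) = -∑ x, g (x * s) * h (x * s) := by simp [hg]
    _ = -∑ x, g x * h x := congrArg _ (Equiv.sum_comp (Equiv.mulRight s) fun x => g x * h x)

theorem Matrix.det_submatrix_of_injective {ι κ R : Type*} [DecidableEq ι] [Fintype κ]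
    [DecidableEq κ] [CommRing R] (P : Matrix ι ι R) {f : κ → ι} (hf : Injective f) :
    (P.submatrix f f).det = (P.submatrix ((↑) : univ.image f → ι) (↑)).det := by
  let g : κ ≃ univ.image f := Equiv.ofBijective (fun m => ⟨f m, mem_image_of_mem f (mem_univ m)⟩)
    ⟨fun _ _ h => hf (congrArg Subtype.val h), by
      rintro ⟨y, hy⟩
      obtain ⟨m, -, rfl⟩ := mem_image.1 hy
      exact ⟨m, rfl⟩⟩
  exact det_submatrix_equiv_self g (P.submatrix ((↑) : univ.image f → ι) (↑))

theorem sum_perm_smul_finset {ι K : Type*} [Fintype ι] [DecidableEq ι] [Field K] [CharZero K]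
    (E : Finset ι) (F : Finset ι → K) :
    ∑ σ : Perm ι, F (σ • E) =
      (#E)! * (Fintype.card ι - #E)! * ∑ S ∈ powersetCard #E univ, F S := by
  set k := #E
  -- `Perm ι` acts transitively on the `k`-subsets, so the left side does not depend on `E`
  have hinv : ∀ E' ∈ powersetCard k univ, ∑ σ : Perm ι, F (σ • E') = ∑ σ : Perm ι, F (σ • E) := by
    intro E' hE'
    obtain ⟨π, hπ⟩ := Set.powersetCard.isPretransitive.exists_smul_eq
      (⟨E, rfl⟩ : Set.powersetCard ι k) ⟨E', (mem_powersetCard_univ.1 hE')⟩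
    have hπE : π • E = E' := by simpa using congrArg Subtype.val hπ
    rw [← hπE]
    simp_rw [smul_smul]
    exact Equiv.sum_comp (Equiv.mulRight π) (fun σ => F (σ • E))
  have hperm : ∀ σ : Perm ι,
      ∑ S ∈ powersetCard k univ, F (σ • S) = ∑ S ∈ powersetCard k univ, F S :=
    fun σ => sum_nbij' (σ • ·) (σ⁻¹ • ·) (by simp [card_smul_finset]) (by simp [card_smul_finset])
      (fun _ _ => inv_smul_smul σ _) (fun _ _ => smul_inv_smul σ _) (fun _ _ => rfl)
  have hcount : ((Fintype.card ι).choose k : K) * ∑ σ : Perm ι, F (σ • E) =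
      (Fintype.card ι)! * ∑ S ∈ powersetCard k univ, F S :=
    calc _ = ∑ E' ∈ powersetCard k univ, ∑ σ : Perm ι, F (σ • E') := by
          rw [sum_congr rfl hinv, sum_const, card_powersetCard, card_univ, nsmul_eq_mul]
      _ = ∑ σ : Perm ι, ∑ E' ∈ powersetCard k univ, F (σ • E') := sum_comm
      _ = _ := by simp [hperm, Fintype.card_perm]
  have hk : k ≤ Fintype.card ι := card_le_univ E
  rw [← Nat.choose_mul_factorial_mul_factorial hk] at hcount
  push_cast at hcount
  have hC : ((Fintype.card ι).choose k : K) ≠ 0 := by exact_mod_cast (Nat.choose_pos hk).ne'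
  apply mul_left_cancel₀ hC
  linear_combination hcount

section Pairs

/- The indices are grouped into the pairs `(e (inl m), e (inr m))`, `m : κ`; for the theorem
these are the slots `(2m, 2m + 1)`. -/

variable {ι κ : Type*} [DecidableEq ι]

def curvatureFactor {n : ℕ} (P : Matrix (Fin n) (Fin n) ℝ) (e : κ ⊕ κ ≃ Fin n) (m : κ)
    (x : Perm (Fin n) × Perm (Fin n)) : ℝ :=
  kroneckerCurvature P (x.1 (e (inl m))) (x.1 (e (inr m))) (x.2 (e (inl m))) (x.2 (e (inr m)))

def leadingFactor {R : Type*} [Semiring R] (P : Matrix ι ι R) (e : κ ⊕ κ ≃ ι) (m : κ)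
    (x : Perm ι × Perm ι) : R :=
  P (x.1 (e (inl m))) (x.2 (e (inl m))) * if x.1 (e (inr m)) = x.2 (e (inr m)) then 1 else 0

theorem sum_mul_curvatureFactor {n : ℕ} (P : Matrix (Fin n) (Fin n) ℝ) (e : κ ⊕ κ ≃ Fin n)
    (m : κ) (g : Perm (Fin n) × Perm (Fin n) → ℝ)
    (hg₁ : ∀ x, g (x * (swap (e (inl m)) (e (inr m)), 1)) = -g x)
    (hg₂ : ∀ x, g (x * (1, swap (e (inl m)) (e (inr m)))) = -g x) :
    ∑ x, g x * curvatureFactor P e m x = 4 * ∑ x, g x * leadingFactor P e m x := by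
  set s := swap (e (inl m)) (e (inr m))
  set h := leadingFactor P e m
  -- the four terms of the curvature factor are `h` composed with the swaps of the pair
  have hR : ∀ x, curvatureFactor P e m x =
      h x - h (x * (1, s)) - h (x * (s, 1)) + h (x * (s, 1) * (1, s)) := by
    intro x
    simp [h, s, curvatureFactor, leadingFactor, kroneckerCurvature]
  simp only [hR, mul_add, mul_sub, sum_add_distrib, sum_sub_distrib,
    Fintype.sum_mul_comp_mul_right_of_neg g (fun x => h (x * (1, s))) _ hg₁,
    Fintype.sum_mul_comp_mul_right_of_neg g h _ hg₁, Fintype.sum_mul_comp_mul_right_of_neg g h _ hg₂]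
  ring

theorem sum_mul_prod_curvatureFactor {n : ℕ} (P : Matrix (Fin n) (Fin n) ℝ)
    (e : κ ⊕ κ ≃ Fin n) (A : Finset κ) (g : Perm (Fin n) × Perm (Fin n) → ℝ)
    (hg₁ : ∀ m ∈ A, ∀ x, g (x * (swap (e (inl m)) (e (inr m)), 1)) = -g x)
    (hg₂ : ∀ m ∈ A, ∀ x, g (x * (1, swap (e (inl m)) (e (inr m)))) = -g x) :
    ∑ x, g x * ∏ m ∈ A, curvatureFactor P e m x =
      4 ^ #A * ∑ x, g x * ∏ m ∈ A, leadingFactor P e m x := by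
  classical
  induction A using Finset.induction_on generalizing g with
  | empty => simp
  | @insert m A hm ih =>
    have hne : ∀ m' ∈ A, m' ≠ m := fun m' hm' h => hm (h ▸ hm')
    -- the factors of a pair are unchanged by the transposition of another pair, so the parity
    -- hypotheses pass to `g` times the factors of `m` (for `ih`) or of `A` (for the pair `m`)
    simp only [prod_insert hm, card_insert_of_notMem hm, pow_succ, mul_left_comm (g _),
      ← mul_assoc]
    rw [ih]
    · have hA : ∀ x t, (t = (swap (e (inl m)) (e (inr m)), 1) ∨
            t = (1, swap (e (inl m)) (e (inr m)))) →
          ∏ m' ∈ A, leadingFactor P e m' (x * t) = ∏ m' ∈ A, leadingFactor P e m' x :=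
        fun x t ht => prod_congr rfl fun m' hm' => by
          rcases ht with rfl | rfl <;> simp [leadingFactor, swap_apply_of_ne_of_ne, hne m' hm']
      have key := sum_mul_curvatureFactor P e m (fun x => g x * ∏ m ∈ A, leadingFactor P e m x)
        (fun x => by simp [hA x _ (.inl rfl), hg₁ m (mem_insert_self m A)])
        (fun x => by simp [hA x _ (.inr rfl), hg₂ m (mem_insert_self m A)])
      rw [mul_assoc]
      congr 1
      calc _ = _ := sum_congr rfl fun x _ => by ring
        _ = _ := key
        _ = _ := by rw [mul_sum, mul_sum]; exact sum_congr rfl fun x _ => by ring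
    all_goals
      intro m' hm' x
      simp [curvatureFactor, hg₁ m' (mem_insert_of_mem hm'), hg₂ m' (mem_insert_of_mem hm'),
        swap_apply_of_ne_of_ne, (hne m' hm').symm]

theorem sum_sign_mul_prod_curvatureFactor [Fintype κ] {n : ℕ} (P : Matrix (Fin n) (Fin n) ℝ)
    (e : κ ⊕ κ ≃ Fin n) :
    ∑ x : Perm (Fin n) × Perm (Fin n), ((sign x.1 : ℤ) : ℝ) * ((sign x.2 : ℤ) : ℝ) *
        ∏ m, curvatureFactor P e m x =
      4 ^ Fintype.card κ * ∑ x : Perm (Fin n) × Perm (Fin n),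
        ((sign x.1 : ℤ) : ℝ) * ((sign x.2 : ℤ) : ℝ) * ∏ m, leadingFactor P e m x := by
  have hswap : ∀ m, sign (swap (e (inl m)) (e (inr m))) = -1 := fun m => sign_swap (by simp)
  simpa using sum_mul_prod_curvatureFactor P e univ (fun x => (sign x.1 : ℤ) * (sign x.2 : ℝ))
    (by simp [hswap]) (by simp [hswap])

variable [Fintype ι] [Fintype κ] [DecidableEq κ] {R : Type*} [CommRing R]

theorem sum_sign_mul_prod_leadingFactor_one (P : Matrix ι ι R) (e : κ ⊕ κ ≃ ι) :
    ∑ τ : Perm ι, ((sign τ : ℤ) : R) * ∏ m, leadingFactor P e m (1, τ) =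
      (P.submatrix (e ∘ inl) (e ∘ inl)).det := by
  set N : Matrix (κ ⊕ κ) (κ ⊕ κ) R :=
    fromBlocks (P.submatrix (e ∘ inl) (e ∘ inl)) (P.submatrix (e ∘ inl) (e ∘ inr)) 0 1
  have hinl : ∀ m y, N (inl m) y = P (e (inl m)) (e y) := by
    rintro m (y | y) <;> rfl
  have hinr : ∀ m y, N (inr m) y = if e (inr m) = e y then 1 else 0 := by
    rintro m (y | y) <;> simp [N, Matrix.one_apply]
  calc ∑ τ : Perm ι, ((sign τ : ℤ) : R) * ∏ m, leadingFactor P e m (1, τ)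
      = ∑ ρ : Perm (κ ⊕ κ), ((sign ρ : ℤ) : R) * ∏ x, N x (ρ x) := by
        rw [← Equiv.sum_comp e.permCongr]
        refine sum_congr rfl fun ρ _ => ?_
        simp only [leadingFactor, Fintype.prod_sum_type, hinl, hinr, sign_permCongr,
          permCongr_apply, symm_apply_apply, Perm.one_apply, ← prod_mul_distrib]
    _ = N.det := by rw [← det_transpose, det_apply']; rfl
    _ = _ := by simp [N]

theorem sum_sign_mul_sign_mul_prod_leadingFactor (P : Matrix ι ι R) (e : κ ⊕ κ ≃ ι)
    (σ : Perm ι) :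
    ∑ τ : Perm ι, ((sign σ : ℤ) : R) * ((sign τ : ℤ) : R) * ∏ m, leadingFactor P e m (σ, τ) =
      (P.submatrix (σ ∘ e ∘ inl) (σ ∘ e ∘ inl)).det := by
  have hσ : ((sign σ : ℤ) : R) * (sign σ : ℤ) = 1 := by
    rw [← Int.cast_mul, ← Units.val_mul, Int.units_mul_self]; simp
  rw [show (σ ∘ e ∘ inl : κ → ι) = e.trans σ ∘ inl from rfl,
    ← sum_sign_mul_prod_leadingFactor_one P (e.trans σ), ← Equiv.sum_comp (Equiv.mulRight σ)]
  refine sum_congr rfl fun τ _ => ?_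
  have hτ : ∀ m, leadingFactor P (e.trans σ) m (1, τ) = leadingFactor P e m (σ, τ * σ) :=
    fun _ => rfl
  simp only [hτ, coe_mulRight, Perm.sign_mul, Units.val_mul, Int.cast_mul]
  linear_combination (((sign τ : ℤ) : R) * ∏ m, leadingFactor P e m (σ, τ * σ)) * hσ

end Pairs

theorem sum_sign_mul_sign_mul_prod_kroneckerCurvature {κ : Type*} [Fintype κ] [DecidableEq κ]
    {n : ℕ} (e : κ ⊕ κ ≃ Fin n) (P : Matrix (Fin n) (Fin n) ℝ) :
    ∑ σ : Perm (Fin n), ∑ τ : Perm (Fin n), ((sign σ : ℤ) : ℝ) * ((sign τ : ℤ) : ℝ) *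
        ∏ m, kroneckerCurvature P (σ (e (inl m))) (σ (e (inr m))) (τ (e (inl m))) (τ (e (inr m))) =
      2 ^ n * ((Fintype.card κ)! : ℝ) ^ 2 * principalMinorSum (Fintype.card κ) P := by
  set k := Fintype.card κ
  have hn : n = k + k := by simpa using (Fintype.card_congr e).symm
  have he : Injective (e ∘ inl) := e.injective.comp inl_injective
  set E := univ.image (e ∘ inl)
  have hE : #E = k := card_image_of_injective _ he
  calc _ = 4 ^ k * ∑ x : Perm (Fin n) × Perm (Fin n),
        ((sign x.1 : ℤ) : ℝ) * ((sign x.2 : ℤ) : ℝ) * ∏ m, leadingFactor P e m x := by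
        rw [← Fintype.sum_prod_type']; exact sum_sign_mul_prod_curvatureFactor P e
    _ = 4 ^ k * ∑ σ : Perm (Fin n), (P.submatrix (σ ∘ e ∘ inl) (σ ∘ e ∘ inl)).det := by
        rw [Fintype.sum_prod_type]; simp only [sum_sign_mul_sign_mul_prod_leadingFactor]
    _ = 4 ^ k * ∑ σ : Perm (Fin n), det fun i j : ↥(σ • E) => P i j := by
        refine congrArg _ (sum_congr rfl fun σ _ => ?_)
        rw [det_submatrix_of_injective P (σ.injective.comp he), smul_finset_def, image_image]
        rfl
    _ = 2 ^ n * (k ! : ℝ) ^ 2 * principalMinorSum k P := by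
        have h4 : (2 : ℝ) ^ n = 4 ^ k := by rw [hn, ← two_mul, pow_mul]; norm_num
        rw [sum_perm_smul_finset E fun S => det fun i j : S => P i j, hE,
          Fintype.card_fin, show n - k = k by omega, h4, principalMinorSum]
        ring

theorem bijective_sumElim_two_mul {n : ℕ} (hn : Even n) :
    Bijective (Sum.elim (fun m : Fin (n / 2) => (⟨2 * m.1, by omega⟩ : Fin n))
      fun m : Fin (n / 2) => (⟨2 * m.1 + 1, by omega⟩ : Fin n)) := by
  have := Nat.even_iff.1 hn
  refine (Fintype.bijective_iff_injective_and_card _).2 ⟨?_, ?_⟩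
  · rintro (a | a) (b | b) h <;>
      simp only [Sum.elim_inl, Sum.elim_inr, Fin.ext_iff, Sum.inl.injEq, Sum.inr.injEq,
        reduceCtorEq] at h ⊢ <;> omega
  · simp only [Fintype.card_sum, Fintype.card_fin]; omega

theorem pfaffian_eq_esymm (n : ℕ) (hne : Even n)
    (P : Matrix (Fin n) (Fin n) ℝ) :
    (∑ σ : Equiv.Perm (Fin n), ∑ τ : Equiv.Perm (Fin n),
      ((Equiv.Perm.sign σ : ℤ) : ℝ) * ((Equiv.Perm.sign τ : ℤ) : ℝ) *
        ∏ m : Fin (n / 2),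
          kroneckerCurvature P
            (σ ⟨2 * m.1, by have := m.2; omega⟩)
            (σ ⟨2 * m.1 + 1, by have := m.2; omega⟩)
            (τ ⟨2 * m.1, by have := m.2; omega⟩)
            (τ ⟨2 * m.1 + 1, by have := m.2; omega⟩)) =
      2 ^ n * ((n / 2).factorial : ℝ) ^ 2 * principalMinorSum (n / 2) P := by
  simpa using sum_sign_mul_sign_mul_prod_kroneckerCurvature
    (Equiv.ofBijective _ (bijective_sumElim_two_mul hne)) P
end

section
/- Let n > 2, let g be a symmetric positive definite n×n real matrix and P a symmetric n×n real matrix, and for x ∈ ℝ set g_x := g − x²·P + (x⁴/4)·P·g⁻¹·P. Then for all x ∈ ℝ, det(g_x) / det(g) = ( Σ_{k=0}^{n} (−1/2)^k · σ_k(g⁻¹P) · x^{2k} )², where σ_k(A) denotes the sum over all subsets S of Fin n of cardinality k of the determinants of the principal submatrices of A with rows and columns indexed by S (with σ_0(A) = 1). In particular, writing det(g_x)/det(g) = Σ_j c_j x^{2j}, the coefficients c_j vanish for j > n. -/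
open Polynomial Finset

namespace Matrix

variable {ι R : Type*} [Fintype ι] [DecidableEq ι] [CommRing R]

theorem det_one_add_smul_eq_sum_minors (t : R) (M : Matrix ι ι R) :
    det (1 + t • M) = ∑ k ∈ range (Fintype.card ι + 1),
      (∑ s ∈ univ.powersetCard k, (M.submatrix (Subtype.val : s → ι) Subtype.val).det) * t ^ k := by
  have hdeg : (det (1 + (X : R[X]) • M.map C)).natDegree < Fintype.card ι + 1 := by
    have h := natDegree_det_X_add_C_le M 1
    rw [Matrix.map_one C (map_zero C) (map_one C), add_comm] at h
    exact Nat.lt_succ_of_le h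
  have heval : (det (1 + (X : R[X]) • M.map C)).eval t = det (1 + t • M) := by
    rw [← coe_evalRingHom, RingHom.map_det]
    congr 1
    ext i j
    simp only [RingHom.mapMatrix_apply, map_apply, add_apply, one_apply, smul_apply, smul_eq_mul,
      coe_evalRingHom, eval_add, eval_mul, eval_X, eval_C, apply_ite (eval t), eval_one, eval_zero]
  rw [← heval, eval_eq_sum_range' hdeg]
  simp_rw [coeff_det_one_add_X_smul_eq_sum_minors]

theorem mul_one_add_smul_inv_mul_sq (g P : Matrix ι ι R) (hg : IsUnit g.det) (t : R) :
    g * (1 + t • (g⁻¹ * P)) ^ 2 = g + (2 * t) • P + t ^ 2 • (P * g⁻¹ * P) := by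
  have hgg : g * g⁻¹ = 1 := mul_nonsing_inv g hg
  simp only [sq, Matrix.mul_add, Matrix.add_mul, Matrix.mul_one, Matrix.one_mul, Matrix.mul_smul,
    Matrix.smul_mul, ← Matrix.mul_assoc, hgg]
  module

end Matrix

theorem principalMinorSum_eq_sum_det_submatrix {n : ℕ} (k : ℕ) (A : Matrix (Fin n) (Fin n) ℝ) :
    principalMinorSum k A =
      ∑ s ∈ univ.powersetCard k, (A.submatrix (Subtype.val : s → Fin n) Subtype.val).det :=
  rfl

open Matrix

theorem det_poincare_expansion_general (n : ℕ)
    (g P : Matrix (Fin n) (Fin n) ℝ) (hg : g.PosDef) :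
    ∀ x : ℝ,
      (g - x ^ 2 • P + (x ^ 4 / 4) • (P * g⁻¹ * P)).det / g.det =
        (∑ k ∈ Finset.range (n + 1),
          (-(1:ℝ)/2) ^ k * principalMinorSum k (g⁻¹ * P) * x ^ (2 * k)) ^ 2 := by
  intro x
  have hdet : g.det ≠ 0 := hg.det_pos.ne'
  have hfactor : g - x ^ 2 • P + (x ^ 4 / 4) • (P * g⁻¹ * P) =
      g * (1 + (-x ^ 2 / 2) • (g⁻¹ * P)) ^ 2 := by
    rw [mul_one_add_smul_inv_mul_sq g P hdet.isUnit, sub_eq_add_neg, ← neg_smul]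
    congr 3 <;> ring
  rw [hfactor, det_mul, det_pow, mul_div_cancel_left₀ _ hdet, det_one_add_smul_eq_sum_minors,
    Fintype.card_fin]
  congr 1
  refine sum_congr rfl fun k _ => ?_
  rw [pow_mul, principalMinorSum_eq_sum_det_submatrix]
  ring

theorem det_poincare_expansion (n : ℕ) (hn : 2 < n)
    (g P : Matrix (Fin n) (Fin n) ℝ) (hg : g.PosDef) (hgs : g.IsSymm)
    (hP : P.IsSymm) :
    ∀ x : ℝ,
      (g - x ^ 2 • P + (x ^ 4 / 4) • (P * g⁻¹ * P)).det / g.det =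
        (∑ k ∈ Finset.range (n + 1),
          (-(1:ℝ)/2) ^ k * principalMinorSum k (g⁻¹ * P) * x ^ (2 * k)) ^ 2 :=
  det_poincare_expansion_general n g P hg
end
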